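/- arXiv:1808.06272 — 11 statements merged into one kernel-verified Lean document; each statement's English description precedes it below -/
import Mathlib

section
/- Let u, v, k be positive integers with min{u,v,k} > 1 and gcd(u,v) = 1. If (l₁,m₁) and (l₂,m₂) are two solutions in positive integers of u^l + v^m = k with l₁ < l₂ (hence m₁ > m₂), then max{u^(l₂−l₁), v^(m₁−m₂)} > √k. -/
theorem stmt_2 (u v k l₁ m₁ l₂ m₂ : ℕ)
    (hu : 1 < u) (hv : 1 < v) (hk : 1 < k) (huv : Nat.Coprime u v)
    (hl₁ : 0 < l₁) (hm₁ : 0 < m₁) (hl₂ : 0 < l₂) (hm₂ : 0 < m₂)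
    (h1 : u ^ l₁ + v ^ m₁ = k) (h2 : u ^ l₂ + v ^ m₂ = k)
    (hl : l₁ < l₂) (hm : m₂ < m₁) :
    ((max (u ^ (l₂ - l₁)) (v ^ (m₁ - m₂)) : ℕ) : ℝ) > Real.sqrt k := by
  set A := u ^ (l₂ - l₁) with hA
  set B := v ^ (m₁ - m₂) with hB
  have hAu : u ^ l₂ = u ^ l₁ * A := by
    rw [hA, ← pow_add]; congr 1; omega
  have hBv : v ^ m₁ = v ^ m₂ * B := by
    rw [hB, ← pow_add]; congr 1; omega
  have hA1 : 1 < A := one_lt_pow₀ hu (by omega)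
  have hB1 : 1 < B := one_lt_pow₀ hv (by omega)
  have hul : 0 < u ^ l₁ := pow_pos (by omega) _
  have hvm : 0 < v ^ m₂ := pow_pos (by omega) _
  have key : u ^ l₁ * (A - 1) = v ^ m₂ * (B - 1) := by
    have e : u ^ l₁ + v ^ m₂ * B = u ^ l₁ * A + v ^ m₂ := by
      rw [← hAu, ← hBv]; omega
    zify [hA1.le, hB1.le]
    push_cast at e
    linarith
  have hcop : (u ^ l₁).Coprime (v ^ m₂) := Nat.Coprime.pow l₁ m₂ huv
  have hd1 : u ^ l₁ ∣ B - 1 := by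
    have : u ^ l₁ ∣ v ^ m₂ * (B - 1) := ⟨A - 1, key.symm⟩
    exact hcop.dvd_of_dvd_mul_left this
  have hd2 : v ^ m₂ ∣ A - 1 := by
    have : v ^ m₂ ∣ u ^ l₁ * (A - 1) := ⟨B - 1, key⟩
    exact (hcop.symm).dvd_of_dvd_mul_left this
  have hBge : u ^ l₁ + 1 ≤ B := by
    have := Nat.le_of_dvd (by omega) hd1; omega
  have hAge : v ^ m₂ + 1 ≤ A := by
    have := Nat.le_of_dvd (by omega) hd2; omega
  have hmain : k < (max A B) ^ 2 := by
    have h3 : A * B ≥ A * (u ^ l₁ + 1) := Nat.mul_le_mul_left A hBge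
    have h4 : (max A B) ^ 2 ≥ A * B := by
      rcases le_total A B with h | h
      · rw [max_eq_right h, sq]; exact Nat.mul_le_mul_right B h
      · rw [max_eq_left h, sq]; exact Nat.mul_le_mul_left A h
    calc k = u ^ l₁ * A + v ^ m₂ := by rw [← hAu]; omega
      _ < A * (u ^ l₁ + 1) := by nlinarith
      _ ≤ (max A B) ^ 2 := le_trans h3 h4
  have hmaxpos : (0 : ℝ) < (max A B : ℕ) := by positivity
  rw [gt_iff_lt, show ((max A B : ℕ) : ℝ) = ((max A B : ℕ) : ℝ) from rfl,
    Real.sqrt_lt' hmaxpos]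
  calc (k : ℝ) < ((max A B) ^ 2 : ℕ) := by exact_mod_cast hmain
    _ = _ := by push_cast; ring
end

section
/- Let u, v, k be positive integers with min{u,v,k} > 1 and gcd(u,v) = 1. If (l₁,m₁) and (l₂,m₂) are two positive integer solutions of u^l + v^m = k with l₁ < l₂ and m₁ > m₂, then there exists a positive integer t such that u^(l₂−l₁) = v^(m₂)·t + 1 and v^(m₁−m₂) = u^(l₁)·t + 1. -/
/-! Writing `A = u ^ l₁`, `B = v ^ m₂`, `X = u ^ (l₂ - l₁)` and `Y = v ^ (m₁ - m₂)`, equating the two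
solutions gives `A + B * Y = A * X + B`, i.e. `A * (X - 1) = B * (Y - 1)`. Since `A` and `B` are
coprime, `B ∣ X - 1`; the quotient `t` then also satisfies `Y - 1 = A * t`. -/

theorem Nat.exists_eq_mul_add_one_of_add_mul_eq_mul_add {A B X Y : ℕ} (hAB : A.Coprime B)
    (hB : B ≠ 0) (hX : X ≠ 0) (h : A + B * Y = A * X + B) :
    ∃ t, X = B * t + 1 ∧ Y = A * t + 1 := by
  obtain ⟨X', rfl⟩ := Nat.exists_eq_succ_of_ne_zero hX
  have hBY : B * Y = A * X' + B := by linarith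
  obtain ⟨t, rfl⟩ : B ∣ X' :=
    hAB.symm.dvd_of_dvd_mul_left ⟨Y - 1, by rw [Nat.mul_sub_one, hBY, Nat.add_sub_cancel]⟩
  refine ⟨t, rfl, Nat.eq_of_mul_eq_mul_left (Nat.pos_of_ne_zero hB) ?_⟩
  rw [hBY]
  ring

theorem stmt_3_general (u v k l₁ m₁ l₂ m₂ : ℕ)
    (hu : 1 < u) (hv : 1 < v) (huv : Nat.Coprime u v)
    (h1 : u ^ l₁ + v ^ m₁ = k) (h2 : u ^ l₂ + v ^ m₂ = k)
    (hl : l₁ < l₂) (hm : m₂ < m₁) :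
    ∃ t : ℕ, 0 < t ∧ u ^ (l₂ - l₁) = v ^ m₂ * t + 1 ∧
      v ^ (m₁ - m₂) = u ^ l₁ * t + 1 := by
  have hX : 1 < u ^ (l₂ - l₁) := Nat.one_lt_pow (by omega) hu
  have h : u ^ l₁ + v ^ m₂ * v ^ (m₁ - m₂) = u ^ l₁ * u ^ (l₂ - l₁) + v ^ m₂ := by
    rw [← pow_add, ← pow_add, Nat.add_sub_cancel' hm.le, Nat.add_sub_cancel' hl.le, h1, ← h2,
      add_comm]
  obtain ⟨t, hXt, hYt⟩ := Nat.exists_eq_mul_add_one_of_add_mul_eq_mul_add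
    (Nat.Coprime.pow l₁ m₂ huv) (pow_ne_zero m₂ (by omega)) (by omega) h
  refine ⟨t, Nat.pos_of_ne_zero ?_, hXt, hYt⟩
  rintro rfl
  omega

theorem stmt_3 (u v k l₁ m₁ l₂ m₂ : ℕ)
    (hu : 1 < u) (hv : 1 < v) (hk : 1 < k) (huv : Nat.Coprime u v)
    (hl₁ : 0 < l₁) (hm₁ : 0 < m₁) (hl₂ : 0 < l₂) (hm₂ : 0 < m₂)
    (h1 : u ^ l₁ + v ^ m₁ = k) (h2 : u ^ l₂ + v ^ m₂ = k)
    (hl : l₁ < l₂) (hm : m₂ < m₁) :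
    ∃ t : ℕ, 0 < t ∧ u ^ (l₂ - l₁) = v ^ m₂ * t + 1 ∧
      v ^ (m₁ - m₂) = u ^ l₁ * t + 1 :=
  stmt_3_general u v k l₁ m₁ l₂ m₂ hu hv huv h1 h2 hl hm
end

section
/- Let u, v, k be positive integers with min{u,v,k} > 1 and gcd(u,v) = 1. If (l₁,m₁) and (l₂,m₂) are two positive integer solutions of u^l − v^m = k with l₁ < l₂ (hence m₁ < m₂), then there exists a positive integer t with u^(l₂−l₁) = v^(m₁)·t + 1 and v^(m₂−m₁) = u^(l₁)·t + 1. -/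
theorem stmt_5 (u v k l₁ m₁ l₂ m₂ : ℕ)
    (hu : 1 < u) (hv : 1 < v) (hk : 1 < k) (huv : Nat.Coprime u v)
    (hl₁ : 0 < l₁) (hm₁ : 0 < m₁) (hl₂ : 0 < l₂) (hm₂ : 0 < m₂)
    (h1 : u ^ l₁ = v ^ m₁ + k) (h2 : u ^ l₂ = v ^ m₂ + k)
    (hl : l₁ < l₂) (hm : m₁ < m₂) :
    ∃ t : ℕ, 0 < t ∧ u ^ (l₂ - l₁) = v ^ m₁ * t + 1 ∧
      v ^ (m₂ - m₁) = u ^ l₁ * t + 1 := by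
  set d := l₂ - l₁ with hd
  set e := m₂ - m₁ with he
  have hud : 1 < u ^ d := one_lt_pow₀ hu (by omega)
  have hve : 1 < v ^ e := one_lt_pow₀ hv (by omega)
  have hupos : 0 < u ^ l₁ := pow_pos (by omega) _
  have hvpos : 0 < v ^ m₁ := pow_pos (by omega) _
  have hsplit : u ^ l₂ = u ^ l₁ * u ^ d := by
    rw [← pow_add]; congr 1; omega
  have hsplit' : v ^ m₂ = v ^ m₁ * v ^ e := by
    rw [← pow_add]; congr 1; omega
  have key : u ^ l₁ * (u ^ d - 1) = v ^ m₁ * (v ^ e - 1) := by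
    have h3 : u ^ l₂ + v ^ m₁ = v ^ m₂ + u ^ l₁ := by omega
    rw [hsplit, hsplit'] at h3
    have := Nat.le_of_lt hud
    have := Nat.le_of_lt hve
    rw [Nat.mul_sub_one, Nat.mul_sub_one]
    omega
  have hcop : Nat.Coprime (v ^ m₁) (u ^ l₁) :=
    Nat.Coprime.pow _ _ huv.symm
  have hdvd : v ^ m₁ ∣ u ^ d - 1 := by
    have : v ^ m₁ ∣ u ^ l₁ * (u ^ d - 1) := ⟨v ^ e - 1, key⟩
    exact (Nat.Coprime.dvd_of_dvd_mul_left hcop this)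
  obtain ⟨t, ht⟩ := hdvd
  refine ⟨t, ?_, ?_, ?_⟩
  · rcases Nat.eq_zero_or_pos t with h | h
    · simp [h] at ht; omega
    · exact h
  · omega
  · have : u ^ l₁ * (v ^ m₁ * t) = v ^ m₁ * (v ^ e - 1) := by rw [← ht]; exact key
    have h4 : u ^ l₁ * t = v ^ e - 1 := by
      have := Nat.eq_of_mul_eq_mul_left hvpos (by linarith [this] : v ^ m₁ * (u ^ l₁ * t) = v ^ m₁ * (v ^ e - 1))
      omega
    omega
end

section
/- Let u, v, k be positive integers with min{u,v,k} > 1 and gcd(u,v) = 1. If (l₁,m₁) and (l₂,m₂) are two positive integer solutions of u^l − v^m = k with l₁ < l₂ and m₁ < m₂, then v^(m₂−m₁) > u^(l₂−l₁) > v^(m₁) and v^(m₂−m₁) > k. -/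
theorem stmt_6 (u v k l₁ m₁ l₂ m₂ : ℕ)
    (hu : 1 < u) (hv : 1 < v) (hk : 1 < k) (huv : Nat.Coprime u v)
    (hl₁ : 0 < l₁) (hm₁ : 0 < m₁) (hl₂ : 0 < l₂) (hm₂ : 0 < m₂)
    (h1 : u ^ l₁ = v ^ m₁ + k) (h2 : u ^ l₂ = v ^ m₂ + k)
    (hl : l₁ < l₂) (hm : m₁ < m₂) :
    v ^ (m₂ - m₁) > u ^ (l₂ - l₁) ∧ u ^ (l₂ - l₁) > v ^ m₁ ∧
      v ^ (m₂ - m₁) > k := by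
  set a := l₂ - l₁ with ha_def
  set b := m₂ - m₁ with hb_def
  have ha : 0 < a := by omega
  have hb : 0 < b := by omega
  have hu2 : u ^ l₂ = u ^ l₁ * u ^ a := by rw [← pow_add]; congr 1; omega
  have hv2 : v ^ m₂ = v ^ m₁ * v ^ b := by rw [← pow_add]; congr 1; omega
  have hA : 1 < u ^ a := Nat.one_lt_pow ha.ne' hu
  have hB : 1 < v ^ b := Nat.one_lt_pow hb.ne' hv
  have hP : 0 < v ^ m₁ := pow_pos (by omega) _
  have hQ : 0 < u ^ l₁ := pow_pos (by omega) _
  have e1 : u ^ l₁ * u ^ a = v ^ m₁ * v ^ b + k := by rw [← hu2, ← hv2]; exact h2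
  have key : u ^ l₁ * (u ^ a - 1) = v ^ m₁ * (v ^ b - 1) := by
    have e1z : (u:ℤ) ^ l₁ * u ^ a = v ^ m₁ * v ^ b + k := by exact_mod_cast e1
    have h1z : (u:ℤ) ^ l₁ = v ^ m₁ + k := by exact_mod_cast h1
    zify [hA.le, hB.le]
    linear_combination e1z - h1z
  have cop : Nat.Coprime (v ^ m₁) (u ^ l₁) := Nat.Coprime.pow m₁ l₁ huv.symm
  have hdvd : v ^ m₁ ∣ u ^ a - 1 := by
    refine cop.dvd_of_dvd_mul_right ?_
    exact ⟨v ^ b - 1, by rw [mul_comm (u ^ a - 1), key]⟩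
  have hle : v ^ m₁ ≤ u ^ a - 1 := Nat.le_of_dvd (by omega) hdvd
  have goal2 : u ^ a > v ^ m₁ := lt_of_le_of_lt hle (Nat.sub_lt (by omega) one_pos)
  have goal1 : v ^ b > u ^ a := by
    have h3 : v ^ m₁ * (u ^ a - 1) < v ^ m₁ * (v ^ b - 1) := by
      calc v ^ m₁ * (u ^ a - 1) < u ^ l₁ * (u ^ a - 1) := by
            apply Nat.mul_lt_mul_of_lt_of_le _ le_rfl (by omega)
            omega
        _ = v ^ m₁ * (v ^ b - 1) := key
    have h4 := Nat.lt_of_mul_lt_mul_left h3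
    omega
  have key2 : k * (u ^ a - 1) = v ^ m₁ * (v ^ b - u ^ a) := by
    have e1z : (u:ℤ) ^ l₁ * u ^ a = v ^ m₁ * v ^ b + k := by exact_mod_cast e1
    have h1z : (u:ℤ) ^ l₁ = v ^ m₁ + k := by exact_mod_cast h1
    zify [hA.le, goal1.le]
    linear_combination e1z - (u:ℤ) ^ a * h1z
  have h5 : k * (v ^ m₁) ≤ v ^ m₁ * (v ^ b - u ^ a) := by
    rw [← key2]
    exact Nat.mul_le_mul_left k hle
  have h6 : k ≤ v ^ b - u ^ a := by
    rw [mul_comm] at h5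
    exact Nat.le_of_mul_le_mul_left h5 hP
  exact ⟨goal1, goal2, by omega⟩
end

section
/- Let r, s be coprime positive integers with min{r,s} > 1 and suppose s > 2 (in particular this holds when 2 ∤ s or 4 ∣ s). Let n₁ be the least positive integer with r^(n₁) ≡ ±1 (mod s), and write r^(n₁) = s·f + δ₁ with δ₁ ∈ {1,−1} and f a positive integer. Let t > 1 be a positive integer each of whose prime divisors divides s, and let n' be a positive integer with r^(n') ≡ ±1 (mod s·t). If 2 ∤ s or 4 ∣ s, then n₁ divides n' and (t / gcd(t,f)) divides n'/n₁. -/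
/-!
Reducing modulo `s`, the exponents `n` with `r ^ n ≡ ±1` are closed under taking remainders
(the classes `±1` form a group), so the least one, `n₁`, divides `n'`. Writing `n' = n₁ m`, we get
`(s f + δ₁) ^ m = r ^ n' ≡ ±1 (mod s t)`; as `s > 2` the sign must be `δ₁ ^ m`, so
`s t ∣ (s f + δ₁) ^ m - δ₁ ^ m`. For each prime `p ∣ t` we have `p ∣ s`, and lifting the exponent
(this is where `4 ∣ s` is needed for `p = 2`) gives `v_p((s f + δ₁) ^ m - δ₁ ^ m) = v_p(s f m)`.
Hence `s t ∣ s f m`, i.e. `t ∣ f m`, which is `t / gcd(t, f) ∣ m`.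
-/

section SignPower

variable {M : Type*} [Monoid M] [HasDistribNeg M]

lemma mul_eq_one_or_neg_one {a b : M} (ha : a = 1 ∨ a = -1) (hb : b = 1 ∨ b = -1) :
    a * b = 1 ∨ a * b = -1 := by
  rcases ha with rfl | rfl <;> rcases hb with rfl | rfl <;> simp

lemma pow_eq_one_or_neg_one {a : M} (ha : a = 1 ∨ a = -1) (n : ℕ) :
    a ^ n = 1 ∨ a ^ n = -1 := by
  rcases ha with rfl | rfl
  · simp
  · exact neg_one_pow_eq_or M n

theorem dvd_of_pow_eq_one_or_neg_one {x : M} {n₀ n : ℕ} (hn₀ : 0 < n₀)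
    (hmin : ∀ k, 0 < k → (x ^ k = 1 ∨ x ^ k = -1) → n₀ ≤ k)
    (h₀ : x ^ n₀ = 1 ∨ x ^ n₀ = -1) (h : x ^ n = 1 ∨ x ^ n = -1) : n₀ ∣ n := by
  set u := (x ^ n₀) ^ (n / n₀)
  have hu : u = 1 ∨ u = -1 := pow_eq_one_or_neg_one h₀ _
  have huu : u * u = 1 := by rcases hu with hu | hu <;> simp [hu]
  have hrem : x ^ (n % n₀) = u * x ^ n := by
    conv_rhs => rw [← Nat.div_add_mod n n₀, pow_add, pow_mul, ← mul_assoc, huu, one_mul]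
  by_contra hnd
  have hpos : 0 < n % n₀ := Nat.pos_of_ne_zero fun h0 => hnd (Nat.dvd_of_mod_eq_zero h0)
  have := hmin _ hpos (hrem ▸ mul_eq_one_or_neg_one hu h)
  exact (Nat.mod_lt n hn₀).not_ge this

end SignPower

lemma ZMod.intCast_eq_one_or_neg_one_iff {n : ℕ} {a : ℤ} :
    ((a : ZMod n) = 1 ∨ (a : ZMod n) = -1) ↔ (a ≡ 1 [ZMOD n] ∨ a ≡ -1 [ZMOD n]) := by
  simp only [← ZMod.intCast_eq_intCast_iff, Int.cast_one, Int.cast_neg]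

lemma Int.eq_of_modEq_of_eq_one_or_neg_one {n a b : ℤ} (hn : 2 < n)
    (ha : a = 1 ∨ a = -1) (hb : b = 1 ∨ b = -1) (h : a ≡ b [ZMOD n]) : a = b := by
  have hn2 : ¬ n ∣ 2 := fun hd => absurd (Int.le_of_dvd two_pos hd) (not_le.mpr hn)
  rcases ha with rfl | rfl <;> rcases hb with rfl | rfl
  · rfl
  · exact absurd (by simpa using h.dvd) hn2
  · exact absurd (by simpa using h.dvd) hn2
  · rfl

/-- Lifting the exponent. -/
theorem Int.emultiplicity_pow_sub_pow_of_prime {p : ℕ} (hp : p.Prime) {x y : ℤ}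
    (hxy : (p : ℤ) ∣ x - y) (h4 : p = 2 → 4 ∣ x - y) (hx : ¬ (p : ℤ) ∣ x) (n : ℕ) :
    emultiplicity (p : ℤ) (x ^ n - y ^ n) = emultiplicity (p : ℤ) ((x - y) * n) := by
  rw [emultiplicity_mul (Nat.prime_iff_prime_int.mp hp)]
  rcases hp.eq_two_or_odd' with rfl | hodd
  · exact Int.two_pow_sub_pow' n (h4 rfl) hx
  · rw [Int.natCast_emultiplicity]
    exact Int.emultiplicity_pow_sub_pow hp hodd hxy hx n

lemma Int.mul_dvd_add_pow_sub_pow {s t a δ ε : ℤ} {m : ℕ} (hs : 2 < s)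
    (hδ : δ = 1 ∨ δ = -1) (hε : ε = 1 ∨ ε = -1) (h : (s * a + δ) ^ m ≡ ε [ZMOD s * t]) :
    s * t ∣ (s * a + δ) ^ m - δ ^ m := by
  have hbase : (s * a + δ) ^ m ≡ δ ^ m [ZMOD s] := by
    rw [add_comm]; exact Int.modEq_add_fac_self.pow m
  have hsign : δ ^ m = ε :=
    Int.eq_of_modEq_of_eq_one_or_neg_one hs (pow_eq_one_or_neg_one hδ m) hε
      (hbase.symm.trans (h.of_mul_right t))
  rw [hsign]
  exact h.symm.dvd

lemma Nat.dvd_mul_of_mul_dvd_add_pow_sub_pow {s t f m : ℕ} {δ : ℤ} (hs : 0 < s)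
    (hδ : δ = 1 ∨ δ = -1) (htdvd : ∀ p : ℕ, p.Prime → p ∣ t → p ∣ s)
    (hcase : ¬ 2 ∣ s ∨ 4 ∣ s) (hD : (s * t : ℤ) ∣ (s * f + δ) ^ m - δ ^ m) : t ∣ f * m := by
  refine Nat.dvd_of_mul_dvd_mul_left hs ((Nat.dvd_iff_prime_pow_dvd_dvd _ _).mpr ?_)
  intro p k hp hpk
  by_cases hpt : p ∣ t
  · have hps : (p : ℤ) ∣ s := Int.natCast_dvd_natCast.mpr (htdvd p hp hpt)
    have hpx : ¬ (p : ℤ) ∣ s * f + δ := by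
      rw [dvd_add_right (hps.mul_right _)]
      rcases hδ with rfl | rfl <;> simpa using (Nat.prime_iff_prime_int.mp hp).not_dvd_one
    have h4 : p = 2 → 4 ∣ (s * f + δ) - δ := by
      rintro rfl
      have h4s : 4 ∣ s := hcase.resolve_left (not_not.mpr (htdvd 2 hp hpt))
      rw [add_sub_cancel_right]
      exact (Int.natCast_dvd_natCast.mpr h4s).mul_right _
    have hLTE := Int.emultiplicity_pow_sub_pow_of_prime hp (by simpa using hps.mul_right f) h4 hpx m
    have hpkD : (p : ℤ) ^ k ∣ (s * f + δ) ^ m - δ ^ m :=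
      (Int.natCast_dvd_natCast.mpr hpk).trans (by exact_mod_cast hD)
    rw [pow_dvd_iff_le_emultiplicity, hLTE, ← pow_dvd_iff_le_emultiplicity,
      add_sub_cancel_right] at hpkD
    rw [← mul_assoc]
    exact_mod_cast hpkD
  · have hcop : (p ^ k).Coprime t := Nat.Coprime.pow_left k ((hp.coprime_iff_not_dvd).mpr hpt)
    exact (hcop.dvd_of_dvd_mul_right hpk).mul_right _

lemma Nat.div_gcd_dvd_of_dvd_mul {t f m : ℕ} (hf : 0 < f) (h : t ∣ f * m) :
    t / t.gcd f ∣ m := by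
  have hg : 0 < t.gcd f := Nat.gcd_pos_of_pos_right t hf
  refine (Nat.coprime_div_gcd_div_gcd hg).dvd_of_dvd_mul_left
    (Nat.dvd_of_mul_dvd_mul_left hg ?_)
  rwa [← mul_assoc, Nat.mul_div_cancel' (Nat.gcd_dvd_left t f),
    Nat.mul_div_cancel' (Nat.gcd_dvd_right t f)]

theorem stmt_8_general (r s t n₁ n' f : ℕ) (δ₁ : ℤ)
    (hs2 : 2 < s)
    (hδ₁ : δ₁ = 1 ∨ δ₁ = -1) (hf : 0 < f)
    (hn₁pos : 0 < n₁)
    (heq : (r : ℤ) ^ n₁ = (s : ℤ) * f + δ₁)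
    (hleast : ∀ n : ℕ, 0 < n →
      ((r : ℤ) ^ n ≡ 1 [ZMOD (s : ℤ)] ∨ (r : ℤ) ^ n ≡ -1 [ZMOD (s : ℤ)]) → n₁ ≤ n)
    (htdvd : ∀ p : ℕ, p.Prime → p ∣ t → p ∣ s)
    (hmod : (r : ℤ) ^ n' ≡ 1 [ZMOD ((s : ℤ) * t)] ∨
            (r : ℤ) ^ n' ≡ -1 [ZMOD ((s : ℤ) * t)])
    (hcase : ¬ 2 ∣ s ∨ 4 ∣ s) :
    n₁ ∣ n' ∧ (t / Nat.gcd t f) ∣ (n' / n₁) := by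
  have hsign (k : ℕ) : ((r : ZMod s) ^ k = 1 ∨ (r : ZMod s) ^ k = -1) ↔
      ((r : ℤ) ^ k ≡ 1 [ZMOD s] ∨ (r : ℤ) ^ k ≡ -1 [ZMOD s]) := by
    have := ZMod.intCast_eq_one_or_neg_one_iff (n := s) (a := (r : ℤ) ^ k)
    push_cast at this
    exact this
  have hbase : (r : ℤ) ^ n₁ ≡ δ₁ [ZMOD s] := by
    rw [heq, add_comm]
    exact Int.modEq_add_fac_self
  obtain ⟨m, rfl⟩ : n₁ ∣ n' := dvd_of_pow_eq_one_or_neg_one hn₁pos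
    (fun k hk h => hleast k hk ((hsign k).mp h))
    ((hsign n₁).mpr (by rcases hδ₁ with rfl | rfl <;> simp [hbase]))
    ((hsign n').mpr (hmod.imp (·.of_mul_right _) (·.of_mul_right _)))
  refine ⟨dvd_mul_right n₁ m, ?_⟩
  rw [Nat.mul_div_cancel_left m hn₁pos]
  have hD : ((s : ℤ) * t) ∣ ((s : ℤ) * f + δ₁) ^ m - δ₁ ^ m := by
    rw [pow_mul, heq] at hmod
    rcases hmod with h | h
    · exact Int.mul_dvd_add_pow_sub_pow (by exact_mod_cast hs2) hδ₁ (.inl rfl) h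
    · exact Int.mul_dvd_add_pow_sub_pow (by exact_mod_cast hs2) hδ₁ (.inr rfl) h
  exact Nat.div_gcd_dvd_of_dvd_mul hf
    (Nat.dvd_mul_of_mul_dvd_add_pow_sub_pow (by omega) hδ₁ htdvd hcase hD)

theorem stmt_8 (r s t n₁ n' f : ℕ) (δ₁ : ℤ)
    (hr : 1 < r) (hs : 1 < s) (hrs : Nat.Coprime r s) (hs2 : 2 < s)
    (hδ₁ : δ₁ = 1 ∨ δ₁ = -1) (hf : 0 < f)
    (hn₁pos : 0 < n₁)
    (heq : (r : ℤ) ^ n₁ = (s : ℤ) * f + δ₁)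
    (hleast : ∀ n : ℕ, 0 < n →
      ((r : ℤ) ^ n ≡ 1 [ZMOD (s : ℤ)] ∨ (r : ℤ) ^ n ≡ -1 [ZMOD (s : ℤ)]) → n₁ ≤ n)
    (ht : 1 < t) (htdvd : ∀ p : ℕ, p.Prime → p ∣ t → p ∣ s)
    (hn' : 0 < n')
    (hmod : (r : ℤ) ^ n' ≡ 1 [ZMOD ((s : ℤ) * t)] ∨
            (r : ℤ) ^ n' ≡ -1 [ZMOD ((s : ℤ) * t)])
    (hcase : ¬ 2 ∣ s ∨ 4 ∣ s) :
    n₁ ∣ n' ∧ (t / Nat.gcd t f) ∣ (n' / n₁) :=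
  stmt_8_general r s t n₁ n' f δ₁ hs2 hδ₁ hf hn₁pos heq hleast htdvd hmod hcase
end

section
/- Let p be a prime and let s, f, n₂ be positive integers with p ∣ n₂, p ∣ s·f, and additionally p^2 ∣ s·f if p = 2. Let δ ∈ {1,−1}. If p^α exactly divides n₂, then p^α exactly divides n₂ + Σ_{i=2}^{n₂} C(n₂,i)·(δ·s·f)^(i−1), i.e., p^α divides the sum but p^(α+1) does not. -/
/-!
Every term `C(n, i) · m^(i-1)` (`m = δ s f`, `i ≥ 2`) of the sum is divisible by `p^(α+1)`, so adding
the sum to `n` does not change the exact power of `p` dividing `n`. For the terms, the identity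
`i · C(n, i) = n · C(n-1, i-1)` gives `v_p(C(n, i)) ≥ α - v_p(i)`, while
`p^(v_p(i)) ≤ i` together with Bernoulli's inequality gives `v_p(i) + 1 ≤ (i - 1) · v_p(m)`;
for `p = 2` the latter needs `v_2(m) ≥ 2`.
-/

namespace Nat

theorem one_add_mul_factorization_le {p n : ℕ} (hp : p.Prime) (hn : n ≠ 0) :
    1 + n.factorization p * (p - 1) ≤ n := by
  have hp1 : 1 + (p - 1) = p := by have := hp.one_lt; omega
  calc 1 + n.factorization p * (p - 1) ≤ (1 + (p - 1)) ^ n.factorization p :=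
        one_add_le_pow_of_two_add_nonneg (Nat.zero_le _) _
    _ = p ^ n.factorization p := by rw [hp1]
    _ ≤ n := ordProj_le p hn

theorem le_factorization_add_factorization_choose {p n i α : ℕ} (hp : p.Prime)
    (hpn : p ^ α ∣ n) (hi : i ≠ 0) (hin : i ≤ n) :
    α ≤ (n.choose i).factorization p + i.factorization p := by
  have hchoose : n * (n - 1).choose (i - 1) = n.choose i * i := by
    have := add_one_mul_choose_eq (n - 1) (i - 1)
    rwa [Nat.sub_add_cancel (by omega), Nat.sub_add_cancel (by omega)] at this
  have hne : n.choose i * i ≠ 0 := Nat.mul_ne_zero (choose_pos hin).ne' hi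
  have hdvd : p ^ α ∣ n.choose i * i := hchoose ▸ hpn.mul_right _
  rw [hp.pow_dvd_iff_le_factorization hne,
    factorization_mul (choose_pos hin).ne' hi] at hdvd
  exact hdvd

end Nat

theorem pow_factorization_add_one_dvd_pow_sub_one {p i : ℕ} {m : ℤ} (hp : p.Prime)
    (hi : 2 ≤ i) (hpm : (p : ℤ) ∣ m) (hp2 : p = 2 → (p : ℤ) ^ 2 ∣ m) :
    (p : ℤ) ^ (i.factorization p + 1) ∣ m ^ (i - 1) := by
  have hbound := Nat.one_add_mul_factorization_le hp (n := i) (by omega)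
  by_cases h2 : p = 2
  · subst h2
    calc ((2 : ℕ) : ℤ) ^ (i.factorization 2 + 1) ∣ (((2 : ℕ) : ℤ) ^ 2) ^ (i - 1) := by
          rw [← pow_mul]; exact pow_dvd_pow _ (by omega)
      _ ∣ m ^ (i - 1) := pow_dvd_pow_of_dvd (hp2 rfl) _
  · have hp3 : 2 ≤ p - 1 := by have := hp.two_le; omega
    have : i.factorization p * 2 ≤ i.factorization p * (p - 1) := Nat.mul_le_mul_left _ hp3
    calc (p : ℤ) ^ (i.factorization p + 1) ∣ (p : ℤ) ^ (i - 1) := pow_dvd_pow _ (by omega)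
      _ ∣ m ^ (i - 1) := pow_dvd_pow_of_dvd hpm _

theorem pow_succ_dvd_choose_mul_pow {p n i α : ℕ} {m : ℤ} (hp : p.Prime) (hpn : p ^ α ∣ n)
    (hi : 2 ≤ i) (hpm : (p : ℤ) ∣ m) (hp2 : p = 2 → (p : ℤ) ^ 2 ∣ m) :
    (p : ℤ) ^ (α + 1) ∣ (n.choose i : ℤ) * m ^ (i - 1) := by
  rcases le_or_gt i n with hin | hin
  swap
  · simp [Nat.choose_eq_zero_of_lt hin]
  have hα := Nat.le_factorization_add_factorization_choose hp hpn (by omega) hin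
  calc (p : ℤ) ^ (α + 1)
      ∣ (p : ℤ) ^ ((n.choose i).factorization p + (i.factorization p + 1)) :=
        pow_dvd_pow _ (by omega)
    _ = (p : ℤ) ^ (n.choose i).factorization p * (p : ℤ) ^ (i.factorization p + 1) := pow_add ..
    _ ∣ (n.choose i : ℤ) * m ^ (i - 1) :=
        mul_dvd_mul (by exact_mod_cast Nat.ordProj_dvd _ _)
          (pow_factorization_add_one_dvd_pow_sub_one hp hi hpm hp2)

theorem stmt_9_general (p s f n₂ α : ℕ) (δ : ℤ)
    (hp : p.Prime)
    (hpsf : p ∣ s * f) (hp2 : p = 2 → p ^ 2 ∣ s * f)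
    (hα : p ^ α ∣ n₂ ∧ ¬ p ^ (α + 1) ∣ n₂) :
    (p : ℤ) ^ α ∣ ((n₂ : ℤ) + ∑ i ∈ Finset.Icc 2 n₂,
        (n₂.choose i : ℤ) * (δ * s * f) ^ (i - 1)) ∧
    ¬ (p : ℤ) ^ (α + 1) ∣ ((n₂ : ℤ) + ∑ i ∈ Finset.Icc 2 n₂,
        (n₂.choose i : ℤ) * (δ * s * f) ^ (i - 1)) := by
  obtain ⟨hαn, hαn'⟩ := hα
  have hpm : (p : ℤ) ∣ δ * s * f := by
    rw [mul_assoc]; exact Dvd.dvd.mul_left (by exact_mod_cast hpsf) δ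
  have hp2m : p = 2 → (p : ℤ) ^ 2 ∣ δ * s * f := fun h => by
    rw [mul_assoc]; exact Dvd.dvd.mul_left (by exact_mod_cast hp2 h) δ
  have hsum : (p : ℤ) ^ (α + 1) ∣ ∑ i ∈ Finset.Icc 2 n₂,
      (n₂.choose i : ℤ) * (δ * s * f) ^ (i - 1) :=
    Finset.dvd_sum fun i hi =>
      pow_succ_dvd_choose_mul_pow hp hαn (Finset.mem_Icc.mp hi).1 hpm hp2m
  constructor
  · exact dvd_add (by exact_mod_cast hαn) ((pow_dvd_pow _ α.le_succ).trans hsum)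
  · rw [dvd_add_left hsum]
    exact_mod_cast hαn'

theorem stmt_9 (p s f n₂ α : ℕ) (δ : ℤ)
    (hp : p.Prime) (hs : 0 < s) (hf : 0 < f) (hn₂ : 0 < n₂)
    (hpn : p ∣ n₂) (hpsf : p ∣ s * f) (hp2 : p = 2 → p ^ 2 ∣ s * f)
    (hδ : δ = 1 ∨ δ = -1)
    (hα : p ^ α ∣ n₂ ∧ ¬ p ^ (α + 1) ∣ n₂) :
    (p : ℤ) ^ α ∣ ((n₂ : ℤ) + ∑ i ∈ Finset.Icc 2 n₂,
        (n₂.choose i : ℤ) * (δ * s * f) ^ (i - 1)) ∧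
    ¬ (p : ℤ) ^ (α + 1) ∣ ((n₂ : ℤ) + ∑ i ∈ Finset.Icc 2 n₂,
        (n₂.choose i : ℤ) * (δ * s * f) ^ (i - 1)) :=
  stmt_9_general p s f n₂ α δ hp hpsf hp2 hα
end

section
/- Let a, b, c be coprime positive integers with min{a,b,c} > 1, b ≥ 3, c ≥ 16, and gcd(b,c) = 1. If (x,y,z) is a positive integer solution of a^x + b^y = c^z with a^(2x) < c^z, then gcd(y,z) = 1, and 0 < log c / log b − y/z < 2/(z · c^(z/2) · log b); in particular y/z is a convergent of the simple continued fraction expansion of log c / log b. -/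
/-!
If `d = gcd(y, z) ≥ 2`, then `a^x = U^d - V^d` with `U = c^(z/d) > V = b^(y/d)`, so
`a^x ≥ U^(d-1)` and `a^(2x) ≥ U^(2d-2) ≥ U^d = c^z`; hence `gcd(y, z) = 1`.
With `s = c^(z/2)` and `a^x < s`, `z log c - y log b = log (c^z / b^y) < a^x / b^y < 2 / s`,
which gives the approximation bound after dividing by `z log b`. Since `s ≥ 4^z ≥ 4z` and
`log b > 1`, the bound is below `1 / (2z²)`, so `y / z` is a convergent by Legendre's theorem.
-/

open Real

theorem Nat.pow_succ_add_pow_le_pow_succ {u v : ℕ} (h : v < u) (d : ℕ) :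
    v ^ (d + 1) + u ^ d ≤ u ^ (d + 1) :=
  calc v ^ (d + 1) + u ^ d = v ^ d * v + u ^ d := by rw [pow_succ]
    _ ≤ u ^ d * v + u ^ d := by gcongr
    _ = u ^ d * (v + 1) := by ring
    _ ≤ u ^ (d + 1) := by rw [pow_succ]; gcongr; exact h

theorem Nat.coprime_of_add_pow_eq_pow {A b c y z : ℕ} (hA : 0 < A) (hz : 0 < z)
    (heq : A + b ^ y = c ^ z) (hlt : A ^ 2 < c ^ z) : y.Coprime z := by
  by_contra hd
  obtain ⟨e, he⟩ : ∃ e, y.gcd z = e + 2 :=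
    ⟨y.gcd z - 2, by have := Nat.gcd_pos_of_pos_right y hz; unfold Nat.Coprime at hd; omega⟩
  obtain ⟨m, hm⟩ := Nat.gcd_dvd_left y z
  obtain ⟨n, hn⟩ := Nat.gcd_dvd_right y z
  rw [he] at hm hn
  rw [hm, hn, pow_mul', pow_mul'] at heq
  rw [hn, pow_mul'] at hlt
  set u := c ^ n
  set v := b ^ m
  have hvu : v < u := lt_of_pow_lt_pow_left₀ (e + 2) (Nat.zero_le u) (by omega)
  have hu_le : u ^ (e + 1) ≤ A := by
    have : v ^ (e + 2) + u ^ (e + 1) ≤ u ^ (e + 2) := Nat.pow_succ_add_pow_le_pow_succ hvu _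
    omega
  have : u ^ (e + 2) ≤ A ^ 2 :=
    calc u ^ (e + 2) ≤ u ^ ((e + 1) * 2) := Nat.pow_le_pow_right (by omega) (by omega)
      _ = (u ^ (e + 1)) ^ 2 := pow_mul _ _ _
      _ ≤ A ^ 2 := by gcongr
  omega

theorem Real.log_sq_sub_log_lt_two_div {A B s : ℝ} (hA : 0 < A) (hsum : A + B = s ^ 2)
    (hA2 : A ^ 2 < s ^ 2) (hs : 2 ≤ s) :
    0 < log (s ^ 2) - log B ∧ log (s ^ 2) - log B < 2 / s := by
  have hAs : A < s := (pow_lt_pow_iff_left₀ hA.le (by linarith) two_ne_zero).1 hA2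
  have hB : 0 < B := by nlinarith
  refine ⟨sub_pos.2 (log_lt_log hB (by linarith)), ?_⟩
  calc log (s ^ 2) - log B = log (s ^ 2 / B) := (log_div (by positivity) hB.ne').symm
    _ < s ^ 2 / B - 1 := by
      refine log_lt_sub_one_of_pos (by positivity) ?_
      rw [Ne, div_eq_one_iff_eq hB.ne']
      linarith
    _ = A / B := by field_simp; linarith
    _ ≤ 2 / s := by
      rw [div_le_div_iff₀ hB (by linarith)]
      nlinarith

theorem Real.exists_convs_eq_div_of_abs_sub_lt {ξ : ℝ} {p : ℤ} {q : ℕ} (hq : 0 < q)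
    (hpq : p.natAbs.Coprime q) (h : |ξ - p / q| < 1 / (2 * q ^ 2)) :
    ∃ n, (GenContFract.of ξ).convs n = p / q := by
  have hden : ((p / q : ℚ)).den = q := by
    have := Rat.den_div_eq_of_coprime (a := p) (b := q) (by exact_mod_cast hq) (by simpa using hpq)
    exact_mod_cast this
  obtain ⟨n, hn⟩ := exists_convs_eq_rat (ξ := ξ) (q := p / q) (by push_cast [hden]; exact h)
  exact ⟨n, by rw [hn]; push_cast; rfl⟩

theorem Real.four_mul_le_sqrt_pow {c : ℝ} (hc : 16 ≤ c) (z : ℕ) : 4 * (z : ℝ) ≤ √c ^ z :=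
  calc 4 * (z : ℝ) ≤ 4 ^ z := by exact_mod_cast Nat.mul_le_pow (by norm_num) z
    _ ≤ √c ^ z := pow_le_pow_left₀ (by norm_num) (le_sqrt_of_sq_le (by linarith)) z

theorem two_div_mul_lt_one_div_two_mul_sq {z s L : ℝ} (hz : 0 < z) (hs : 4 * z ≤ s) (hL : 1 < L) :
    2 / (z * s * L) < 1 / (2 * z ^ 2) := by
  have : 4 * z < s * L := by nlinarith
  rw [div_lt_div_iff₀ (mul_pos (mul_pos hz (by linarith)) (by linarith)) (by positivity)]
  nlinarith

theorem stmt_10_general (a b c x y z : ℕ)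
    (ha : 1 < a) (hb : 3 ≤ b) (hc : 16 ≤ c)
    (hz : 0 < z)
    (heq : a ^ x + b ^ y = c ^ z) (hlt : a ^ (2 * x) < c ^ z) :
    Nat.gcd y z = 1 ∧
    0 < Real.log c / Real.log b - (y : ℝ) / z ∧
    Real.log c / Real.log b - (y : ℝ) / z <
      2 / (z * (c : ℝ) ^ ((z : ℝ) / 2) * Real.log b) ∧
    ∃ n : ℕ, (GenContFract.of (Real.log c / Real.log b)).convs n = (y : ℝ) / z := by
  have hA : 0 < a ^ x := Nat.pow_pos (by omega)
  have hcoprime := Nat.coprime_of_add_pow_eq_pow hA hz heq (by rwa [← pow_mul, mul_comm])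
  set s : ℝ := √c ^ z
  have hs : (c : ℝ) ^ ((z : ℝ) / 2) = s := by
    rw [rpow_div_two_eq_sqrt _ (by positivity), rpow_natCast]
  have hs_sq : s ^ 2 = (c : ℝ) ^ z := by rw [← pow_mul, mul_comm, pow_mul, sq_sqrt (by positivity)]
  have h4z : 4 * (z : ℝ) ≤ s := four_mul_le_sqrt_pow (by exact_mod_cast hc) z
  have hzR : (1 : ℝ) ≤ z := by exact_mod_cast hz
  obtain ⟨hgap_pos, hgap_lt⟩ := log_sq_sub_log_lt_two_div (A := (a : ℝ) ^ x) (B := (b : ℝ) ^ y)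
    (by positivity) (by rw [hs_sq]; exact_mod_cast heq)
    (by rw [hs_sq, ← pow_mul, mul_comm]; exact_mod_cast hlt) (by linarith)
  rw [hs_sq, log_pow, log_pow] at hgap_pos hgap_lt
  have hlogb : 1 < log b := by
    have := log_le_log (by norm_num) (show (3 : ℝ) ≤ b by exact_mod_cast hb)
    linarith [log_three_gt_d9]
  have hdiff : log c / log b - y / z = (z * log c - y * log b) / (z * log b) := by field_simp
  have hpos : 0 < log c / log b - y / z := hdiff ▸ div_pos hgap_pos (by positivity)
  have hbound : log c / log b - y / z < 2 / (z * s * log b) := by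
    rw [hdiff, show (2 : ℝ) / (z * s * log b) = 2 / s / (z * log b) by field_simp]
    exact div_lt_div_of_pos_right hgap_lt (by positivity)
  refine ⟨hcoprime, hpos, hs ▸ hbound, ?_⟩
  simpa using exists_convs_eq_div_of_abs_sub_lt (p := y) hz (by simpa using hcoprime)
    (by rw [Int.cast_natCast, abs_of_pos hpos]
        exact hbound.trans (two_div_mul_lt_one_div_two_mul_sq (by positivity) h4z hlogb))

theorem stmt_10 (a b c x y z : ℕ)
    (ha : 1 < a) (hb : 3 ≤ b) (hc : 16 ≤ c)
    (hab : Nat.Coprime a b) (hbc : Nat.Coprime b c) (hac : Nat.Coprime a c)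
    (hx : 0 < x) (hy : 0 < y) (hz : 0 < z)
    (heq : a ^ x + b ^ y = c ^ z) (hlt : a ^ (2 * x) < c ^ z) :
    Nat.gcd y z = 1 ∧
    0 < Real.log c / Real.log b - (y : ℝ) / z ∧
    Real.log c / Real.log b - (y : ℝ) / z <
      2 / (z * (c : ℝ) ^ ((z : ℝ) / 2) * Real.log b) ∧
    ∃ n : ℕ, (GenContFract.of (Real.log c / Real.log b)).convs n = (y : ℝ) / z :=
  stmt_10_general a b c x y z ha hb hc hz heq hlt
end

section
/- Let a, b, c be coprime positive integers with min{a,b,c} > 1. If (x,y,z) is a positive integer solution of a^x + b^y = c^z with a^(2x) < c^z, then gcd(y,z) = 1. -/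
theorem stmt_11 (a b c x y z : ℕ)
    (ha : 1 < a) (hb : 1 < b) (hc : 1 < c)
    (hab : Nat.Coprime a b) (hbc : Nat.Coprime b c) (hac : Nat.Coprime a c)
    (hx : 0 < x) (hy : 0 < y) (hz : 0 < z)
    (heq : a ^ x + b ^ y = c ^ z) (hlt : a ^ (2 * x) < c ^ z) :
    Nat.gcd y z = 1 := by
  by_contra hne
  set d := Nat.gcd y z with hd
  have hd0 : 0 < d := Nat.gcd_pos_of_pos_right y hz
  have hd2 : 2 ≤ d := by omega
  obtain ⟨y', hy'⟩ := Nat.gcd_dvd_left y z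
  obtain ⟨z', hz'⟩ := Nat.gcd_dvd_right y z
  have hz'0 : 0 < z' := by
    rcases Nat.eq_zero_or_pos z' with h | h
    · simp [h] at hz'; omega
    · exact h
  set B : ℤ := (b : ℤ) ^ y' with hB
  set C : ℤ := (c : ℤ) ^ z' with hC
  have hB0 : 0 ≤ B := pow_nonneg (by positivity) _
  have hC1 : 2 ≤ C := by
    calc (2 : ℤ) ≤ (c : ℤ) := by exact_mod_cast hc
    _ = (c : ℤ) ^ 1 := (pow_one _).symm
    _ ≤ C := pow_le_pow_right₀ (by exact_mod_cast hc.le) hz'0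
  have hBy : (b : ℤ) ^ y = B ^ d := by rw [hy', mul_comm, pow_mul]
  have hCz : (c : ℤ) ^ z = C ^ d := by rw [hz', mul_comm, pow_mul]
  have heqZ : (a : ℤ) ^ x + B ^ d = C ^ d := by
    rw [← hBy, ← hCz]; exact_mod_cast heq
  have haxpos : (0 : ℤ) < (a : ℤ) ^ x := by positivity
  set S : ℤ := ∑ i ∈ Finset.range d, C ^ i * B ^ (d - 1 - i) with hS
  have hfac : S * (C - B) = (a : ℤ) ^ x := by
    rw [geom_sum₂_mul]; linarith [heqZ]
  have hSdvd : S ∣ (a : ℤ) ^ x := ⟨C - B, hfac.symm⟩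
  have hSle : S ≤ (a : ℤ) ^ x := Int.le_of_dvd haxpos hSdvd
  have hSge : C ^ (d - 1) ≤ S := by
    have hmem : d - 1 ∈ Finset.range d := Finset.mem_range.mpr (by omega)
    have := Finset.single_le_sum (f := fun i => C ^ i * B ^ (d - 1 - i))
      (fun i _ => mul_nonneg (pow_nonneg (by linarith) _) (pow_nonneg hB0 _)) hmem
    simpa using this
  have hltZ : ((a : ℤ) ^ x) ^ 2 < (C ^ (d - 1)) ^ 2 := by
    have h1 : ((a : ℤ)) ^ (2 * x) < C ^ d := by rw [← hCz]; exact_mod_cast hlt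
    have h2 : C ^ d ≤ (C ^ (d - 1)) ^ 2 := by
      calc C ^ d ≤ C ^ ((d - 1) * 2) := pow_le_pow_right₀ (by linarith) (by omega)
        _ = (C ^ (d - 1)) ^ 2 := pow_mul C (d - 1) 2
    calc ((a : ℤ) ^ x) ^ 2 = (a : ℤ) ^ (2 * x) := by rw [← pow_mul, mul_comm]
      _ < C ^ d := h1
      _ ≤ _ := h2
  have : (a : ℤ) ^ x < C ^ (d - 1) :=
    lt_of_pow_lt_pow_left₀ 2 (pow_nonneg (by linarith) _) hltZ
  linarith
end

section
/- Let a, b, c be coprime positive integers with min{a,b,c} > 1. If (x,y,z) and (x',y',z') are two positive integer solutions of a^x + b^y = c^z with x > x' and z < z', then a^(x') < b^(y') and 0 < log c / log b − y'/z' < 2/(z' · a · c · log b). -/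
/-!
Write `x = x' + d` (`d > 0`) and `y' = y + e`. Reducing both equations modulo `c ^ z` gives
`a ^ x * b ^ y' ≡ a ^ x' * b ^ y`, so `c ^ z` divides `a ^ d * b ^ e - 1`; hence
`a ^ x' * a ^ d = a ^ x < c ^ z < a ^ d * b ^ e`, i.e. `a ^ x' < b ^ e ≤ b ^ y'`.
Then `log c / log b - y' / z' = log (1 + a ^ x' / b ^ y') / (z' * log b)`, which is positive, and
`log (1 + a ^ x' / b ^ y') < a ^ x' / b ^ y' < 2 a ^ x' / c ^ z' ≤ 2 / (a * c)` because
`a ^ (x' + 1) * c ≤ a ^ x * c < c ^ (z + 1) ≤ c ^ z'`.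
-/

open Real

theorem dvd_pow_mul_pow_sub_one_of_add_pow_eq {R : Type*} [CommRing R] {a b c : R}
    {x d y e z f : ℕ} (hac : IsCoprime a c) (hbc : IsCoprime b c)
    (h : a ^ (x + d) + b ^ y = c ^ z) (h' : a ^ x + b ^ (y + e) = c ^ (z + f)) :
    c ^ z ∣ a ^ d * b ^ e - 1 := by
  have hcop : IsCoprime (c ^ z) (a ^ x * b ^ y) := hac.symm.pow.mul_right hbc.symm.pow
  -- `a ^ (x + d) * b ^ (y + e) - a ^ x * b ^ y = c ^ z * (a ^ (x + d) * c ^ f - a ^ x)`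
  refine hcop.dvd_of_dvd_mul_left ⟨a ^ (x + d) * c ^ f - a ^ x, ?_⟩
  simp only [pow_add] at h h' ⊢
  linear_combination a ^ x * a ^ d * h' - a ^ x * h

theorem pow_lt_pow_of_add_pow_eq {a b c x y z x' y' z' : ℕ} (ha : 1 < a) (hb : 1 < b)
    (hc : 0 < c) (hbc : Nat.Coprime b c) (hac : Nat.Coprime a c)
    (heq : a ^ x + b ^ y = c ^ z) (heq' : a ^ x' + b ^ y' = c ^ z')
    (hxx : x' < x) (hzz : z ≤ z') :
    a ^ x' < b ^ y' := by
  have hyy : y < y' := by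
    have : a ^ x' < a ^ x := Nat.pow_lt_pow_right ha hxx
    have : c ^ z ≤ c ^ z' := Nat.pow_le_pow_right hc hzz
    exact (Nat.pow_lt_pow_iff_right hb).mp (by omega)
  obtain ⟨d, rfl⟩ := Nat.exists_eq_add_of_lt hxx
  obtain ⟨e, rfl⟩ := Nat.exists_eq_add_of_le hyy.le
  obtain ⟨f, rfl⟩ := Nat.exists_eq_add_of_le hzz
  have hdvd : (c : ℤ) ^ z ∣ (a : ℤ) ^ (d + 1) * (b : ℤ) ^ e - 1 :=
    dvd_pow_mul_pow_sub_one_of_add_pow_eq (Nat.isCoprime_iff_coprime.mpr hac)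
      (Nat.isCoprime_iff_coprime.mpr hbc) (by rw [← add_assoc]; exact_mod_cast heq)
      (by exact_mod_cast heq')
  have hcz : c ^ z < a ^ (d + 1) * b ^ e := by
    have ha' : a ≤ a ^ (d + 1) := Nat.le_self_pow (Nat.succ_ne_zero d) a
    have hb' : 1 ≤ b ^ e := Nat.one_le_pow _ _ (by omega)
    have : 1 < a ^ (d + 1) * b ^ e := ha.trans_le (ha'.trans (Nat.le_mul_of_pos_right _ hb'))
    have : (c : ℤ) ^ z ≤ (a : ℤ) ^ (d + 1) * (b : ℤ) ^ e - 1 :=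
      Int.le_of_dvd (sub_pos.mpr (by exact_mod_cast this)) hdvd
    zify
    linarith
  have hax : a ^ (d + 1) * a ^ x' < a ^ (d + 1) * b ^ e := by
    have : 0 < b ^ y := Nat.pow_pos (n := y) (by omega)
    rw [mul_comm, ← pow_add, ← add_assoc]
    omega
  calc a ^ x' < b ^ e := Nat.lt_of_mul_lt_mul_left hax
    _ ≤ b ^ (y + e) := Nat.pow_le_pow_right (by omega) (by omega)

theorem pow_mul_mul_le_pow_of_add_pow_eq {a b c x y z x' z' : ℕ} (ha : 0 < a) (hb : 0 < b)
    (hc : 0 < c) (heq : a ^ x + b ^ y = c ^ z) (hxx : x' < x) (hzz : z < z') :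
    a ^ x' * a * c ≤ c ^ z' :=
  calc a ^ x' * a * c ≤ a ^ x * c := by
        rw [← pow_succ]; exact Nat.mul_le_mul_right _ (Nat.pow_le_pow_right ha hxx)
    _ ≤ c ^ z * c := Nat.mul_le_mul_right _ (by have : 0 < b ^ y := Nat.pow_pos hb; omega)
    _ ≤ c ^ z' := by rw [← pow_succ]; exact Nat.pow_le_pow_right hc hzz

theorem log_div_log_sub_div_eq_of_add_pow_eq {A b c : ℝ} {y z : ℕ} (hA : 0 ≤ A) (hb : 0 < b)
    (hlogb : log b ≠ 0) (hz : z ≠ 0) (h : A + b ^ y = c ^ z) :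
    log c / log b - y / z = log (1 + A / b ^ y) / (z * log b) := by
  have hby : 0 < b ^ y := pow_pos hb y
  have hcz : c ^ z ≠ 0 := h ▸ (add_pos_of_nonneg_of_pos hA hby).ne'
  rw [show 1 + A / b ^ y = c ^ z / b ^ y by rw [← h]; field_simp; ring,
    log_div hcz hby.ne', log_pow, log_pow]
  field_simp

theorem log_one_add_div_lt {A B : ℝ} (hA : 0 < A) (hAB : A < B) :
    log (1 + A / B) < 2 * A / (A + B) := by
  have hAB' : 0 < A / B := div_pos hA (hA.trans hAB)
  calc log (1 + A / B) < A / B := by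
        linarith [log_lt_sub_one_of_pos (by linarith : 0 < 1 + A / B) (by linarith)]
    _ < 2 * A / (A + B) := by
        rw [div_lt_div_iff₀ (by linarith) (by linarith)]
        nlinarith

theorem stmt_12_general (a b c x y z x' y' z' : ℕ)
    (ha : 1 < a) (hb : 1 < b) (hc : 1 < c)
    (hbc : Nat.Coprime b c) (hac : Nat.Coprime a c)
    (heq : a ^ x + b ^ y = c ^ z) (heq' : a ^ x' + b ^ y' = c ^ z')
    (hxx : x > x') (hzz : z < z') :
    a ^ x' < b ^ y' ∧
    0 < Real.log c / Real.log b - (y' : ℝ) / z' ∧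
    Real.log c / Real.log b - (y' : ℝ) / z' <
      2 / ((z' : ℝ) * a * c * Real.log b) := by
  have hlt : a ^ x' < b ^ y' :=
    pow_lt_pow_of_add_pow_eq ha hb (by omega) hbc hac heq heq' hxx hzz.le
  have hkey : a ^ x' * a * c ≤ c ^ z' :=
    pow_mul_mul_le_pow_of_add_pow_eq (by omega) (by omega) (by omega) heq hxx hzz
  have hlogb : 0 < log b := log_pos (by exact_mod_cast hb)
  have hA : (0 : ℝ) < a ^ x' := by positivity
  have hAB : (a : ℝ) ^ x' < b ^ y' := by exact_mod_cast hlt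
  rw [log_div_log_sub_div_eq_of_add_pow_eq hA.le (by positivity) hlogb.ne' (by omega)
    (by exact_mod_cast heq')]
  have hz' : (0 : ℝ) < z' := by exact_mod_cast (by omega : 0 < z')
  have hden : (0 : ℝ) < z' * log b := by positivity
  have hAB' : (0 : ℝ) < a ^ x' / b ^ y' := by positivity
  refine ⟨hlt, div_pos (log_pos (by linarith)) hden, ?_⟩
  calc log (1 + (a : ℝ) ^ x' / b ^ y') / (z' * log b)
      < 2 * a ^ x' / (a ^ x' + b ^ y') / (z' * log b) := by
        gcongr; exact log_one_add_div_lt hA hAB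
    _ ≤ 2 / (a * c) / (z' * log b) := by
        gcongr ?_ / _
        rw [div_le_div_iff₀ (by positivity) (by positivity)]
        have : (a : ℝ) ^ x' * a * c ≤ a ^ x' + b ^ y' := by exact_mod_cast hkey.trans heq'.ge
        nlinarith
    _ = 2 / (z' * a * c * log b) := by field_simp

theorem stmt_12 (a b c x y z x' y' z' : ℕ)
    (ha : 1 < a) (hb : 1 < b) (hc : 1 < c)
    (hab : Nat.Coprime a b) (hbc : Nat.Coprime b c) (hac : Nat.Coprime a c)
    (hx : 0 < x) (hy : 0 < y) (hz : 0 < z)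
    (hx' : 0 < x') (hy' : 0 < y') (hz' : 0 < z')
    (heq : a ^ x + b ^ y = c ^ z) (heq' : a ^ x' + b ^ y' = c ^ z')
    (hxx : x > x') (hzz : z < z') :
    a ^ x' < b ^ y' ∧
    0 < Real.log c / Real.log b - (y' : ℝ) / z' ∧
    Real.log c / Real.log b - (y' : ℝ) / z' <
      2 / ((z' : ℝ) * a * c * Real.log b) :=
  stmt_12_general a b c x y z x' y' z' ha hb hc hbc hac heq heq' hxx hzz
end

section
/- Let a, b, c be coprime positive integers with min{a,b,c} > 1. If (x,y,z) and (x',y',z') are two positive integer solutions of a^x + b^y = c^z with y > y' and z ≤ z', then x < x', b^(y−y')·c^(z'−z) > a^x, and 0 < log c / log a − x'/z' < 2/(z' · a^x · log a). -/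
/-!
Write `y = y' + d`, `z' = z + k` and `B = b ^ d * c ^ k`. Multiplying the first equation by `c ^ k`
and comparing with the second gives `a ^ x' = c ^ k * a ^ x + (B - 1) * b ^ y'`. Since `x < x'`,
`a ^ x` divides `(B - 1) * b ^ y'`, hence `B - 1` because `a` and `b` are coprime; so `a ^ x < B`
and `a ^ x * b ^ y' < a ^ x'`. Finally `z' log c - x' log a = log (1 + b ^ y' / a ^ x')` lies
strictly between `0` and `b ^ y' / a ^ x' < 1 / a ^ x`.
-/

section

variable {a b c x y z x' y' z' d k : ℕ}

theorem lt_of_pow_add_pow_eq_pow (ha : 0 < a) (hb : 1 < b) (hc : 0 < c)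
    (h : a ^ x + b ^ y = c ^ z) (h' : a ^ x' + b ^ y' = c ^ z') (hy : y' < y) (hz : z ≤ z') :
    x < x' := by
  by_contra! hx
  have := Nat.pow_le_pow_right ha hx
  have := Nat.pow_lt_pow_right hb hy
  have := Nat.pow_le_pow_right hc hz
  omega

theorem pow_eq_mul_pow_add_sub_one_mul (hb : 0 < b) (hc : 0 < c)
    (h : a ^ x + b ^ (y' + d) = c ^ z) (h' : a ^ x' + b ^ y' = c ^ (z + k)) :
    a ^ x' = c ^ k * a ^ x + (b ^ d * c ^ k - 1) * b ^ y' := by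
  have hsum : a ^ x' + b ^ y' = c ^ k * a ^ x + b ^ d * c ^ k * b ^ y' := by
    rw [h', pow_add, ← h]; ring
  have hB : b ^ y' ≤ b ^ d * c ^ k * b ^ y' := Nat.le_mul_of_pos_left _ (by positivity)
  rw [Nat.sub_one_mul]
  omega

theorem pow_dvd_pow_mul_pow_sub_one (hab : a.Coprime b) (hb : 0 < b) (hc : 0 < c)
    (h : a ^ x + b ^ (y' + d) = c ^ z) (h' : a ^ x' + b ^ y' = c ^ (z + k)) (hx : x ≤ x') :
    a ^ x ∣ b ^ d * c ^ k - 1 := by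
  have hdvd : a ^ x ∣ c ^ k * a ^ x + (b ^ d * c ^ k - 1) * b ^ y' :=
    pow_eq_mul_pow_add_sub_one_mul hb hc h h' ▸ pow_dvd_pow a hx
  exact (Nat.Coprime.pow x y' hab).dvd_of_dvd_mul_right
    ((Nat.dvd_add_right (dvd_mul_left _ _)).mp hdvd)

theorem pow_lt_pow_mul_pow (hab : a.Coprime b) (hb : 1 < b) (hc : 0 < c) (hd : 0 < d)
    (h : a ^ x + b ^ (y' + d) = c ^ z) (h' : a ^ x' + b ^ y' = c ^ (z + k)) (hx : x ≤ x') :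
    a ^ x < b ^ d * c ^ k := by
  have hB : 1 < b ^ d * c ^ k :=
    Nat.lt_of_lt_of_le (Nat.one_lt_pow hd.ne' hb) (Nat.le_mul_of_pos_right _ (by positivity))
  have := Nat.le_of_dvd (by omega) (pow_dvd_pow_mul_pow_sub_one hab (by omega) hc h h' hx)
  omega

theorem pow_mul_pow_lt_pow (ha : 0 < a) (hab : a.Coprime b) (hb : 1 < b) (hc : 0 < c)
    (hd : 0 < d) (h : a ^ x + b ^ (y' + d) = c ^ z) (h' : a ^ x' + b ^ y' = c ^ (z + k))
    (hx : x ≤ x') :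
    a ^ x * b ^ y' < a ^ x' := by
  have hB := pow_lt_pow_mul_pow hab hb hc hd h h' hx
  rw [pow_eq_mul_pow_add_sub_one_mul (by omega) hc h h']
  have : 0 < c ^ k * a ^ x := by positivity
  have : a ^ x * b ^ y' ≤ (b ^ d * c ^ k - 1) * b ^ y' := Nat.mul_le_mul_right _ (by omega)
  omega

end

theorem Real.log_add_sub_log_lt {u v : ℝ} (hu : 0 < u) (hv : 0 < v) :
    Real.log (u + v) - Real.log u < v / u := by
  have hne : (u + v) / u ≠ 1 := by
    rw [Ne, div_eq_one_iff_eq hu.ne']; linarith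
  have := Real.log_lt_sub_one_of_pos (by positivity) hne
  rwa [Real.log_div (by positivity) hu.ne', add_div, div_self hu.ne', add_sub_cancel_left] at this

theorem log_div_log_sub_div_mem_Ioo {a c v : ℝ} {m n : ℕ} (ha : 1 < a) (hv : 0 < v) (hn : 0 < n)
    (h : a ^ m + v = c ^ n) :
    Real.log c / Real.log a - m / n ∈ Set.Ioo 0 (v / a ^ m / (n * Real.log a)) := by
  have hla : 0 < Real.log a := Real.log_pos ha
  have ham : 0 < a ^ m := by positivity
  have hn' : (0 : ℝ) < n := by exact_mod_cast hn
  have key : Real.log c / Real.log a - m / n =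
      (Real.log (a ^ m + v) - Real.log (a ^ m)) / (n * Real.log a) := by
    rw [h, Real.log_pow, Real.log_pow]; field_simp
  rw [key]
  constructor
  · exact div_pos (sub_pos.mpr (Real.log_lt_log ham (by linarith))) (by positivity)
  · gcongr
    exact Real.log_add_sub_log_lt ham hv

theorem stmt_13_general (a b c x y z x' y' z' : ℕ)
    (ha : 1 < a) (hb : 1 < b) (hc : 1 < c)
    (hab : Nat.Coprime a b)
    (hz' : 0 < z')
    (heq : a ^ x + b ^ y = c ^ z) (heq' : a ^ x' + b ^ y' = c ^ z')
    (hyy : y > y') (hzz : z ≤ z') :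
    x < x' ∧ b ^ (y - y') * c ^ (z' - z) > a ^ x ∧
    0 < Real.log c / Real.log a - (x' : ℝ) / z' ∧
    Real.log c / Real.log a - (x' : ℝ) / z' <
      2 / ((z' : ℝ) * (a : ℝ) ^ x * Real.log a) := by
  have hxx := lt_of_pow_add_pow_eq_pow (by omega) hb (by omega) heq heq' hyy hzz
  obtain ⟨d, rfl⟩ := Nat.exists_eq_add_of_le hyy.le
  obtain ⟨k, rfl⟩ := Nat.exists_eq_add_of_le hzz
  rw [Nat.add_sub_cancel_left, Nat.add_sub_cancel_left]
  have hbound : a ^ x * b ^ y' < a ^ x' :=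
    pow_mul_pow_lt_pow (by omega) hab hb (by omega) (by omega) heq heq' hxx.le
  obtain ⟨hpos, hlt⟩ := log_div_log_sub_div_mem_Ioo (a := (a : ℝ)) (c := c) (v := (b : ℝ) ^ y')
    (by exact_mod_cast ha) (by positivity) hz' (by exact_mod_cast heq')
  refine ⟨hxx, pow_lt_pow_mul_pow hab hb (by omega) (by omega) heq heq' hxx.le, hpos,
    hlt.trans_le ?_⟩
  have hratio : (b : ℝ) ^ y' / (a : ℝ) ^ x' ≤ 2 / (a : ℝ) ^ x := by
    have : ((a ^ x * b ^ y' : ℕ) : ℝ) < (a ^ x' : ℕ) := by exact_mod_cast hbound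
    push_cast at this
    rw [div_le_div_iff₀ (by positivity) (by positivity)]
    linarith [mul_comm ((a : ℝ) ^ x) ((b : ℝ) ^ y'), pow_pos (by positivity : (0 : ℝ) < a) x']
  calc _ ≤ 2 / (a : ℝ) ^ x / (_ * Real.log a) := by gcongr
    _ = _ := by ring

theorem stmt_13 (a b c x y z x' y' z' : ℕ)
    (ha : 1 < a) (hb : 1 < b) (hc : 1 < c)
    (hab : Nat.Coprime a b) (hbc : Nat.Coprime b c) (hac : Nat.Coprime a c)
    (hx : 0 < x) (hy : 0 < y) (hz : 0 < z)
    (hx' : 0 < x') (hy' : 0 < y') (hz' : 0 < z')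
    (heq : a ^ x + b ^ y = c ^ z) (heq' : a ^ x' + b ^ y' = c ^ z')
    (hyy : y > y') (hzz : z ≤ z') :
    x < x' ∧ b ^ (y - y') * c ^ (z' - z) > a ^ x ∧
    0 < Real.log c / Real.log a - (x' : ℝ) / z' ∧
    Real.log c / Real.log a - (x' : ℝ) / z' <
      2 / ((z' : ℝ) * (a : ℝ) ^ x * Real.log a) :=
  stmt_13_general a b c x y z x' y' z' ha hb hc hab hz' heq heq' hyy hzz
end

section
/- Let a, b, c be coprime positive integers with min{a,b,c} > 1, and suppose (x₁,y₁,z₁), (x₂,y₂,z₂), (x₃,y₃,z₃) are positive integer solutions of a^x + b^y = c^z with x₁ = x₂ < x₃, y₃ ≤ y₁ < y₂, and z₃ ≤ z₁ < z₂. Then b^(y₁−y₃) > a^(x₁). -/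
theorem stmt_18 (a b c x₁ y₁ z₁ x₂ y₂ z₂ x₃ y₃ z₃ : ℕ)
    (ha : 1 < a) (hb : 1 < b) (hc : 1 < c)
    (hab : Nat.Coprime a b) (hbc : Nat.Coprime b c) (hac : Nat.Coprime a c)
    (hx₁ : 0 < x₁) (hy₁ : 0 < y₁) (hz₁ : 0 < z₁)
    (hx₂ : 0 < x₂) (hy₂ : 0 < y₂) (hz₂ : 0 < z₂)
    (hx₃ : 0 < x₃) (hy₃ : 0 < y₃) (hz₃ : 0 < z₃)
    (h1 : a ^ x₁ + b ^ y₁ = c ^ z₁)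
    (h2 : a ^ x₂ + b ^ y₂ = c ^ z₂)
    (h3 : a ^ x₃ + b ^ y₃ = c ^ z₃)
    (hx12 : x₁ = x₂) (hx13 : x₁ < x₃)
    (hy31 : y₃ ≤ y₁) (hy12 : y₁ < y₂)
    (hz31 : z₃ ≤ z₁) (hz12 : z₁ < z₂) :
    b ^ (y₁ - y₃) > a ^ x₁ := by
  set d := x₃ - x₁ with hd
  set e := y₁ - y₃ with he
  set f := z₁ - z₃ with hf
  have hx : x₃ = x₁ + d := by omega
  have hy : y₁ = y₃ + e := by omega
  have hz : z₁ = z₃ + f := by omega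
  have H1 : (a:ℤ)^x₁ + (b:ℤ)^y₁ = (c:ℤ)^z₁ := by exact_mod_cast h1
  have H3 : (a:ℤ)^x₃ + (b:ℤ)^y₃ = (c:ℤ)^z₃ := by exact_mod_cast h3
  rw [hx, pow_add] at H3
  rw [hy, hz, pow_add, pow_add] at H1
  have key : ((b:ℤ))^y₃ * ((a:ℤ)^d * (b:ℤ)^e - 1)
      = (c:ℤ)^z₃ * ((a:ℤ)^d * (c:ℤ)^f - 1) := by
    linear_combination (a:ℤ)^d * H1 - H3
  have hco : IsCoprime ((c:ℤ)^z₃) ((b:ℤ)^y₃) := by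
    have h : Nat.Coprime (c^z₃) (b^y₃) := Nat.Coprime.pow _ _ hbc.symm
    have := Nat.isCoprime_iff_coprime.mpr h
    exact_mod_cast this
  have hdvd : (c:ℤ)^z₃ ∣ (a:ℤ)^d * (b:ℤ)^e - 1 := by
    have : (c:ℤ)^z₃ ∣ (b:ℤ)^y₃ * ((a:ℤ)^d * (b:ℤ)^e - 1) := ⟨_, key⟩
    exact hco.dvd_of_dvd_mul_left this
  have hd1 : 1 ≤ d := by omega
  have had : (2:ℤ) ≤ (a:ℤ)^d := by
    calc (2:ℤ) ≤ (a:ℤ) := by exact_mod_cast ha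
    _ = (a:ℤ)^1 := (pow_one _).symm
    _ ≤ (a:ℤ)^d := pow_le_pow_right₀ (by exact_mod_cast ha.le) hd1
  have hbe : (1:ℤ) ≤ (b:ℤ)^e := by exact_mod_cast Nat.one_le_pow e b (by omega)
  have hby3 : (1:ℤ) ≤ (b:ℤ)^y₃ := by exact_mod_cast Nat.one_le_pow y₃ b (by omega)
  have hprod : (2:ℤ) * 1 ≤ (a:ℤ)^d * (b:ℤ)^e :=
    mul_le_mul had hbe (by norm_num) (by linarith)
  have hpos : 0 < (a:ℤ)^d * (b:ℤ)^e - 1 := by linarith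
  have hle : (c:ℤ)^z₃ ≤ (a:ℤ)^d * (b:ℤ)^e - 1 := Int.le_of_dvd hpos hdvd
  have hadpos : (0:ℤ) < (a:ℤ)^d := by positivity
  have hmul : (a:ℤ)^x₁ * (a:ℤ)^d < (b:ℤ)^e * (a:ℤ)^d := by
    have hcomm : (a:ℤ)^d * (b:ℤ)^e = (b:ℤ)^e * (a:ℤ)^d := mul_comm _ _
    linarith [H3]
  have hfin : (a:ℤ)^x₁ < (b:ℤ)^e := lt_of_mul_lt_mul_right hmul hadpos.le
  exact_mod_cast hfin
end
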